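/- Assume 0 < m_0 for a fixed unit vector v ∈ ℝ^d. Then the sequence of projected diameters D_n := M_n − m_n is non-negative, non-increasing, and converges to 0 as n → ∞; consequently ⟨x_i(t) − x_j(t), v⟩ → 0 as t → +∞ for all i, j = 1,…,N, ⟨y_i(t) − y_j(t), v⟩ → 0 for all i, j = 1,…,M, and ⟨x_i(t) − y_j(t), v⟩ → 0 for all i = 1,…,N, j = 1,…,M. -/

import Mathlib

/-!
Projected onto a direction `w`, the solution is a linear consensus system with delay: every
projected opinion is attracted by the current opinions of its own population and by the
`τ`-delayed opinions of the other population's leaders, with nonnegative weights that do not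
depend on `w` and have total mass at most `Λ`.

For such a system a bound on the state at a time `a` (the current opinions and the leaders'
history on `[a - τ, a]`) persists, since an agent at the running maximum cannot move up. Used with
`w` and `-w`, this traps every projection between `m_n` and `M_n` after time `6nτ`; used with all
`w`, it bounds `⟪z, w⟫` by `C₀ ‖w‖` and so keeps every agent `z` in the ball of radius `C₀`, where
all weights are at least `Γ / (N + M)`.

If the first leader `x₀` lies in the lower half of `[m_n, M_n]` at time `6nτ`, Grönwall's
inequality keeps it below `M_n` by a fixed fraction of `D_n`, and the gap is handed on with
another fixed factor along the chain `x₀ → x_i`, `x₀ ⇝ y₀` (delayed), `y₀ → y_j` within `3τ`;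
so `M_{n+1} ≤ M_n - ε D_n`. Otherwise the same argument for `-v` raises `m_{n+1}`. Hence
`D_{n+1} ≤ (1 - ε) D_n`, and `D_n → 0` squeezes all pairwise differences.
-/

open Real Set Filter Topology
open scoped BigOperators RealInnerProductSpace

noncomputable section

/-- `Λ` : the maximum of the sup-norms of the four (positive) influence functions. -/
def Lam {d : ℕ} (ψ ψs φ φs : EuclideanSpace ℝ (Fin d) → EuclideanSpace ℝ (Fin d) → ℝ) : ℝ :=
  max
    (max (⨆ p : EuclideanSpace ℝ (Fin d) × EuclideanSpace ℝ (Fin d), ψ p.1 p.2)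
         (⨆ p : EuclideanSpace ℝ (Fin d) × EuclideanSpace ℝ (Fin d), ψs p.1 p.2))
    (max (⨆ p : EuclideanSpace ℝ (Fin d) × EuclideanSpace ℝ (Fin d), φ p.1 p.2)
         (⨆ p : EuclideanSpace ℝ (Fin d) × EuclideanSpace ℝ (Fin d), φs p.1 p.2))

/-- An influence function is admissible when it is continuous, positive and bounded. -/
def Admissible {d : ℕ} (f : EuclideanSpace ℝ (Fin d) → EuclideanSpace ℝ (Fin d) → ℝ) : Prop :=
  Continuous (fun p : EuclideanSpace ℝ (Fin d) × EuclideanSpace ℝ (Fin d) => f p.1 p.2) ∧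
    (∀ z₁ z₂, 0 < f z₁ z₂) ∧
    BddAbove (Set.range fun p : EuclideanSpace ℝ (Fin d) × EuclideanSpace ℝ (Fin d) => f p.1 p.2)

/-- `(x, y)` is a global classical solution of the two-population delayed
Hegselmann–Krause system, with `k` (resp. `h`) leaders in the first (resp. second)
population and time delay `τ`. -/
structure IsSol {d N M : ℕ} (h k : ℕ) (τ : ℝ)
    (ψ ψs φ φs : EuclideanSpace ℝ (Fin d) → EuclideanSpace ℝ (Fin d) → ℝ)
    (x : Fin N → ℝ → EuclideanSpace ℝ (Fin d))
    (y : Fin M → ℝ → EuclideanSpace ℝ (Fin d)) : Prop where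
  contx : ∀ i, Continuous (x i)
  conty : ∀ j, Continuous (y j)
  odex_lead : ∀ i : Fin N, (i : ℕ) < k → ∀ t : ℝ, 0 < t →
    HasDerivAt (x i)
      ((∑ j ∈ Finset.univ.erase i,
          (ψ (x i t) (x j t) / ((N : ℝ) + h - 1)) • (x j t - x i t)) +
        ∑ j ∈ Finset.univ.filter (fun j : Fin M => (j : ℕ) < h),
          (φ (x i t) (y j (t - τ)) / ((N : ℝ) + h - 1)) • (y j (t - τ) - x i t)) t
  odex_foll : ∀ i : Fin N, k ≤ (i : ℕ) → ∀ t : ℝ, 0 < t →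
    HasDerivAt (x i)
      (∑ j ∈ Finset.univ.erase i,
          (ψ (x i t) (x j t) / ((N : ℝ) - 1)) • (x j t - x i t)) t
  odey_lead : ∀ i : Fin M, (i : ℕ) < h → ∀ t : ℝ, 0 < t →
    HasDerivAt (y i)
      ((∑ j ∈ Finset.univ.erase i,
          (ψs (y i t) (y j t) / ((M : ℝ) + k - 1)) • (y j t - y i t)) +
        ∑ j ∈ Finset.univ.filter (fun j : Fin N => (j : ℕ) < k),
          (φs (y i t) (x j (t - τ)) / ((M : ℝ) + k - 1)) • (x j (t - τ) - y i t)) t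
  odey_foll : ∀ i : Fin M, h ≤ (i : ℕ) → ∀ t : ℝ, 0 < t →
    HasDerivAt (y i)
      (∑ j ∈ Finset.univ.erase i,
          (ψs (y i t) (y j t) / ((M : ℝ) - 1)) • (y j t - y i t)) t

/-- `m_0` : the minimum of the projections on `v` of the initial data. -/
def mInit {d N M : ℕ} (h k : ℕ) (τ : ℝ) (v : EuclideanSpace ℝ (Fin d))
    (x : Fin N → ℝ → EuclideanSpace ℝ (Fin d))
    (y : Fin M → ℝ → EuclideanSpace ℝ (Fin d)) : ℝ :=
  min
    (min (⨅ p : {i : Fin N // (i : ℕ) < k} × (Icc (-τ) (0 : ℝ)), ⟪x p.1.1 (p.2 : ℝ), v⟫)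
         (⨅ i : {i : Fin N // k ≤ (i : ℕ)}, ⟪x i.1 0, v⟫))
    (min (⨅ p : {j : Fin M // (j : ℕ) < h} × (Icc (-τ) (0 : ℝ)), ⟪y p.1.1 (p.2 : ℝ), v⟫)
         (⨅ j : {j : Fin M // h ≤ (j : ℕ)}, ⟪y j.1 0, v⟫))

/-- `M_0` : the maximum of the projections on `v` of the initial data. -/
def MInit {d N M : ℕ} (h k : ℕ) (τ : ℝ) (v : EuclideanSpace ℝ (Fin d))
    (x : Fin N → ℝ → EuclideanSpace ℝ (Fin d))
    (y : Fin M → ℝ → EuclideanSpace ℝ (Fin d)) : ℝ :=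
  max
    (max (⨆ p : {i : Fin N // (i : ℕ) < k} × (Icc (-τ) (0 : ℝ)), ⟪x p.1.1 (p.2 : ℝ), v⟫)
         (⨆ i : {i : Fin N // k ≤ (i : ℕ)}, ⟪x i.1 0, v⟫))
    (max (⨆ p : {j : Fin M // (j : ℕ) < h} × (Icc (-τ) (0 : ℝ)), ⟪y p.1.1 (p.2 : ℝ), v⟫)
         (⨆ j : {j : Fin M // h ≤ (j : ℕ)}, ⟪y j.1 0, v⟫))

/-- `C_0` : the maximum of the norms of the initial data. -/
def Cinit {d N M : ℕ} (h k : ℕ) (τ : ℝ)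
    (x : Fin N → ℝ → EuclideanSpace ℝ (Fin d))
    (y : Fin M → ℝ → EuclideanSpace ℝ (Fin d)) : ℝ :=
  max
    (max (⨆ p : {i : Fin N // (i : ℕ) < k} × (Icc (-τ) (0 : ℝ)), ‖x p.1.1 (p.2 : ℝ)‖)
         (⨆ i : {i : Fin N // k ≤ (i : ℕ)}, ‖x i.1 0‖))
    (max (⨆ p : {j : Fin M // (j : ℕ) < h} × (Icc (-τ) (0 : ℝ)), ‖y p.1.1 (p.2 : ℝ)‖)
         (⨆ j : {j : Fin M // h ≤ (j : ℕ)}, ‖y j.1 0‖))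

/-- the minimum of an influence function on the ball of radius `C` (in each variable). -/
def minOnBall {d : ℕ} (C : ℝ)
    (f : EuclideanSpace ℝ (Fin d) → EuclideanSpace ℝ (Fin d) → ℝ) : ℝ :=
  ⨅ p : {z : EuclideanSpace ℝ (Fin d) × EuclideanSpace ℝ (Fin d) // ‖z.1‖ ≤ C ∧ ‖z.2‖ ≤ C},
    f p.1.1 p.1.2

/-- `Γ := min {ψ₀, ψ*₀, φ₀, φ*₀}`. -/
def Gam {d N M : ℕ} (h k : ℕ) (τ : ℝ)
    (ψ ψs φ φs : EuclideanSpace ℝ (Fin d) → EuclideanSpace ℝ (Fin d) → ℝ)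
    (x : Fin N → ℝ → EuclideanSpace ℝ (Fin d))
    (y : Fin M → ℝ → EuclideanSpace ℝ (Fin d)) : ℝ :=
  min (min (minOnBall (Cinit h k τ x y) ψ) (minOnBall (Cinit h k τ x y) ψs))
      (min (minOnBall (Cinit h k τ x y) φ) (minOnBall (Cinit h k τ x y) φs))

/-- `m_n` : minimum of the projections on `v` over the time mesh `I_n = [(6n-1)τ, 6nτ]`. -/
def mSeq {d N M : ℕ} (h k : ℕ) (τ : ℝ) (v : EuclideanSpace ℝ (Fin d))
    (x : Fin N → ℝ → EuclideanSpace ℝ (Fin d))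
    (y : Fin M → ℝ → EuclideanSpace ℝ (Fin d)) (n : ℕ) : ℝ :=
  min
    (min (⨅ p : {i : Fin N // (i : ℕ) < k} × (Icc ((6 * (n : ℝ) - 1) * τ) (6 * (n : ℝ) * τ)),
            ⟪x p.1.1 (p.2 : ℝ), v⟫)
         (⨅ i : {i : Fin N // k ≤ (i : ℕ)}, ⟪x i.1 (6 * (n : ℝ) * τ), v⟫))
    (min (⨅ p : {j : Fin M // (j : ℕ) < h} × (Icc ((6 * (n : ℝ) - 1) * τ) (6 * (n : ℝ) * τ)),
            ⟪y p.1.1 (p.2 : ℝ), v⟫)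
         (⨅ j : {j : Fin M // h ≤ (j : ℕ)}, ⟪y j.1 (6 * (n : ℝ) * τ), v⟫))

/-- `M_n` : maximum of the projections on `v` over the time mesh `I_n = [(6n-1)τ, 6nτ]`. -/
def MSeq {d N M : ℕ} (h k : ℕ) (τ : ℝ) (v : EuclideanSpace ℝ (Fin d))
    (x : Fin N → ℝ → EuclideanSpace ℝ (Fin d))
    (y : Fin M → ℝ → EuclideanSpace ℝ (Fin d)) (n : ℕ) : ℝ :=
  max
    (max (⨆ p : {i : Fin N // (i : ℕ) < k} × (Icc ((6 * (n : ℝ) - 1) * τ) (6 * (n : ℝ) * τ)),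
            ⟪x p.1.1 (p.2 : ℝ), v⟫)
         (⨆ i : {i : Fin N // k ≤ (i : ℕ)}, ⟪x i.1 (6 * (n : ℝ) * τ), v⟫))
    (max (⨆ p : {j : Fin M // (j : ℕ) < h} × (Icc ((6 * (n : ℝ) - 1) * τ) (6 * (n : ℝ) * τ)),
            ⟪y p.1.1 (p.2 : ℝ), v⟫)
         (⨆ j : {j : Fin M // h ≤ (j : ℕ)}, ⟪y j.1 (6 * (n : ℝ) * τ), v⟫))

lemma HasDerivAt.le_of_mul_sub_le_sub {f : ℝ → ℝ} {f' a t ε : ℝ} (hf : HasDerivAt f f' t)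
    (hat : a < t) (hs : ∀ s ∈ Ico a t, ε * (t - s) ≤ f t - f s) : ε ≤ f' := by
  have hslope : Tendsto (slope f t) (𝓝[<] t) (𝓝 f') := by
    simpa using hasDerivWithinAt_iff_tendsto_slope.mp (hf.hasDerivWithinAt (s := Iio t))
  refine ge_of_tendsto hslope ?_
  filter_upwards [Ioo_mem_nhdsLT hat] with s hs'
  rw [slope_def_field, le_div_iff_of_neg (by linarith [hs'.2])]
  linarith [hs s ⟨hs'.1.le, hs'.2⟩]

lemma HasDerivAt.inner_const_right {E : Type*} [NormedAddCommGroup E] [InnerProductSpace ℝ E]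
    {f : ℝ → E} {f' : E} {t : ℝ} (hf : HasDerivAt f f' t) (w : E) :
    HasDerivAt (fun s => ⟪f s, w⟫) ⟪f', w⟫ t := by
  simpa using hf.inner ℝ (hasDerivAt_const t w)

section RunningMax

variable {ι : Type*} [Finite ι] {f f' : ι → ℝ → ℝ} {a b α : ℝ}

/-- The barrier `α + ε (1 + (t - a))` grows strictly, so the first agent to reach it would have
derivative at least `ε` while sitting at the running maximum. -/
lemma lt_barrier_of_deriv_nonpos_at_running_max (hf : ∀ i, Continuous (f i))
    (hf' : ∀ i, ∀ t ∈ Ioc a b, HasDerivAt (f i) (f' i t) t)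
    (hmax : ∀ i, ∀ t ∈ Ioc a b, α < f i t → (∀ j, ∀ s ∈ Icc a t, f j s ≤ f i t) → f' i t ≤ 0)
    (ha : ∀ i, f i a ≤ α) {ε : ℝ} (hε : 0 < ε) :
    ∀ i, ∀ t ∈ Icc a b, f i t < α + ε * (1 + (t - a)) := by
  by_contra! hcross
  obtain ⟨i₀, t₀, ht₀, hi₀⟩ := hcross
  set S := Icc a b ∩ ⋃ j, {t | α + ε * (1 + (t - a)) ≤ f j t}
  have hSc : IsClosed S :=
    isClosed_Icc.inter (isClosed_iUnion_of_finite fun j => isClosed_le (by fun_prop) (hf j))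
  have hSb : BddBelow S := ⟨a, fun t ht => ht.1.1⟩
  have hcS : sInf S ∈ S := hSc.csInf_mem ⟨t₀, ht₀, mem_iUnion.mpr ⟨i₀, hi₀⟩⟩ hSb
  set c := sInf S
  obtain ⟨j₀, hj₀⟩ := mem_iUnion.mp hcS.2
  have : Nonempty ι := ⟨j₀⟩
  obtain ⟨i, hi⟩ := Finite.exists_max fun j => f j c
  have hic : α + ε * (1 + (c - a)) ≤ f i c := hj₀.trans (hi j₀)
  have hac : a < c := by
    refine hcS.1.1.lt_of_ne fun hac => ?_
    have hj₀a : α + ε * (1 + (c - a)) ≤ f j₀ c := hj₀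
    rw [← hac, sub_self] at hj₀a
    linarith [ha j₀]
  have hbefore : ∀ j, ∀ s ∈ Ico a c, f j s < α + ε * (1 + (s - a)) := fun j s hs => by
    by_contra! hjs
    exact (csInf_le hSb ⟨⟨hs.1, hs.2.le.trans hcS.1.2⟩, mem_iUnion.mpr ⟨j, hjs⟩⟩).not_gt hs.2
  have hrun : ∀ j, ∀ s ∈ Icc a c, f j s ≤ f i c := fun j s hs => by
    rcases hs.2.lt_or_eq with hsc | rfl
    · nlinarith [hbefore j s ⟨hs.1, hsc⟩]
    · exact hi j
  have hnonpos := hmax i c ⟨hac, hcS.1.2⟩ (by nlinarith) hrun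
  have hslope : ε ≤ f' i c :=
    (hf' i c ⟨hac, hcS.1.2⟩).le_of_mul_sub_le_sub hac fun s hs => by linarith [hbefore i s hs]
  linarith

theorem le_of_deriv_nonpos_at_running_max (hf : ∀ i, Continuous (f i))
    (hf' : ∀ i, ∀ t ∈ Ioc a b, HasDerivAt (f i) (f' i t) t)
    (hmax : ∀ i, ∀ t ∈ Ioc a b, α < f i t → (∀ j, ∀ s ∈ Icc a t, f j s ≤ f i t) → f' i t ≤ 0)
    (ha : ∀ i, f i a ≤ α) {i : ι} {t : ℝ} (ht : t ∈ Icc a b) : f i t ≤ α := by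
  refine le_of_forall_pos_lt_add fun δ hδ => ?_
  have hpos : 0 < 1 + (t - a) := by linarith [ht.1]
  simpa [div_mul_cancel₀ δ hpos.ne'] using
    lt_barrier_of_deriv_nonpos_at_running_max hf hf' hmax ha (div_pos hδ hpos) i t ht

end RunningMax

theorem gronwall_lower_bound {u u' : ℝ → ℝ} {K c a b : ℝ} (hK : 0 < K) (hab : a ≤ b)
    (hu : Continuous u) (hu' : ∀ t ∈ Ioo a b, HasDerivAt u (u' t) t)
    (hineq : ∀ t ∈ Ioo a b, c - K * u t ≤ u' t) :
    exp (-(K * (b - a))) * u a + c / K * (1 - exp (-(K * (b - a)))) ≤ u b := by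
  set G : ℝ → ℝ := fun t => exp (K * t) * (u t - c / K)
  have hG : ∀ t ∈ Ioo a b, HasDerivAt G (exp (K * t) * (K * (u t - c / K) + u' t)) t := by
    intro t ht
    have hexp : HasDerivAt (fun t => exp (K * t)) (exp (K * t) * K) t := by
      simpa using ((hasDerivAt_id t).const_mul K).exp
    exact (hexp.mul ((hu' t ht).sub_const (c / K))).congr_deriv (by ring)
  have hmono : MonotoneOn G (Icc a b) := by
    refine monotoneOn_of_deriv_nonneg (convex_Icc a b) (by fun_prop) ?_ ?_ <;>
      rw [interior_Icc] <;> intro t ht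
    · exact (hG t ht).differentiableAt.differentiableWithinAt
    · rw [(hG t ht).deriv]
      have : K * (c / K) = c := mul_div_cancel₀ c hK.ne'
      exact mul_nonneg (exp_pos _).le (by linarith [hineq t ht])
  have hGab := hmono (left_mem_Icc.mpr hab) (right_mem_Icc.mpr hab) hab
  have hsplit : exp (K * b) * exp (-(K * (b - a))) = exp (K * a) := by
    rw [← exp_add]; congr 1; ring
  have key : exp (K * b) * (exp (-(K * (b - a))) * u a + c / K * (1 - exp (-(K * (b - a)))))
      = exp (K * a) * (u a - c / K) + exp (K * b) * (c / K) := by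
    rw [← hsplit]; ring
  have hEb := exp_pos (K * b)
  refine le_of_mul_le_mul_left ?_ hEb
  simp only [G] at hGab
  linarith

lemma tendsto_zero_of_le_mul {u : ℕ → ℝ} {r : ℝ} (hu : ∀ n, 0 ≤ u n) (hr0 : 0 ≤ r)
    (hr1 : r < 1) (h : ∀ n, u (n + 1) ≤ r * u n) : Tendsto u atTop (𝓝 0) :=
  squeeze_zero hu (fun n => le_geom hr0 n fun k _ => h k) (by
    simpa using (tendsto_pow_atTop_nhds_zero_of_lt_one hr0 hr1).mul_const (u 0))

lemma tendsto_sub_of_forall_mem_Icc {f g : ℝ → ℝ} {lo hi T : ℕ → ℝ}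
    (hband : Tendsto (fun n => hi n - lo n) atTop (𝓝 0))
    (hf : ∀ n t, T n ≤ t → f t ∈ Icc (lo n) (hi n))
    (hg : ∀ n t, T n ≤ t → g t ∈ Icc (lo n) (hi n)) :
    Tendsto (fun t => f t - g t) atTop (𝓝 0) := by
  rw [Metric.tendsto_atTop]
  intro ε hε
  obtain ⟨n, hn⟩ := Metric.tendsto_atTop.1 hband ε hε
  refine ⟨T n, fun t ht => ?_⟩
  have := hn n le_rfl
  rw [Real.dist_eq, sub_zero] at this ⊢
  obtain ⟨hf₁, hf₂⟩ := hf n t ht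
  obtain ⟨hg₁, hg₂⟩ := hg n t ht
  exact (abs_le.2 ⟨by linarith, by linarith⟩).trans_lt ((le_abs_self _).trans_lt this)

lemma sum_ite_div_le {α : Type*} [Fintype α] (p : α → Prop) [DecidablePred p]
    {f : α → ℝ} {L D : ℝ} (hD : 0 ≤ D) (hf : ∀ j, f j ≤ L) :
    ∑ j, (if p j then f j / D else 0) ≤ (Finset.univ.filter p).card * (L / D) := by
  rw [← Finset.sum_filter, ← nsmul_eq_mul]
  exact Finset.sum_le_card_nsmul _ _ _ fun j _ => div_le_div_of_nonneg_right (hf j) hD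

lemma card_filter_ne_fin {n : ℕ} (i : Fin n) :
    ((Finset.univ.filter fun j : Fin n => j ≠ i).card : ℝ) = n - 1 := by
  rw [Finset.filter_ne', Finset.card_erase_of_mem (Finset.mem_univ i), Finset.card_univ,
    Fintype.card_fin, Nat.cast_sub i.pos]
  simp

lemma card_filter_val_lt_fin {n m : ℕ} (hm : m ≤ n) :
    ((Finset.univ.filter fun j : Fin n => (j : ℕ) < m).card : ℝ) = m := by
  rw [Fin.card_filter_val_lt, min_eq_right hm]

lemma sum_ite_ne_div_le {n : ℕ} (i : Fin n) (hn : 1 < n) {f : Fin n → ℝ} {L : ℝ}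
    (hf : ∀ j, f j ≤ L) : ∑ j, (if j ≠ i then f j / ((n : ℝ) - 1) else 0) ≤ L := by
  have hn' : (1 : ℝ) < n := by exact_mod_cast hn
  have := sum_ite_div_le (fun j => j ≠ i) (by linarith : (0 : ℝ) ≤ n - 1) hf
  rwa [card_filter_ne_fin, mul_div_cancel₀ _ (by linarith)] at this

lemma sum_ite_ne_add_sum_ite_lt_div_le {n n' m : ℕ} (i : Fin n) (hm : 1 ≤ m) (hmn' : m ≤ n')
    {f : Fin n → ℝ} {g : Fin n' → ℝ} {L : ℝ} (hf : ∀ j, f j ≤ L) (hg : ∀ j, g j ≤ L) :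
    ∑ j, (if j ≠ i then f j / ((n : ℝ) + m - 1) else 0) +
      ∑ j : Fin n', (if (j : ℕ) < m then g j / ((n : ℝ) + m - 1) else 0) ≤ L := by
  have hD : (0 : ℝ) < n + m - 1 := by
    have : (1 : ℝ) ≤ n := by exact_mod_cast i.pos
    have : (1 : ℝ) ≤ m := by exact_mod_cast hm
    linarith
  have h₁ := sum_ite_div_le (fun j => j ≠ i) hD.le hf
  have h₂ := sum_ite_div_le (fun j : Fin n' => (j : ℕ) < m) hD.le hg
  rw [card_filter_ne_fin] at h₁
  rw [card_filter_val_lt_fin hmn'] at h₂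
  calc _ ≤ ((n : ℝ) - 1) * (L / (n + m - 1)) + m * (L / (n + m - 1)) := add_le_add h₁ h₂
    _ = L := by rw [← add_mul, show (n : ℝ) - 1 + m = n + m - 1 by ring, mul_div_cancel₀ _ hD.ne']

lemma div_mul_one_sub_exp_mem_Icc {γ K τ : ℝ} (hγ : 0 < γ) (hγK : γ ≤ K) (hτ : 0 ≤ τ) :
    γ / K * (1 - exp (-(K * τ))) ∈ Icc 0 1 := by
  have hK := hγ.trans_le hγK
  have hexp : exp (-(K * τ)) ≤ 1 := exp_le_one_iff.2 (by nlinarith)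
  exact ⟨mul_nonneg (by positivity) (by linarith),
    mul_le_one₀ ((div_le_one hK).2 hγK) (by linarith) (by linarith [exp_pos (-(K * τ))])⟩

section DelayedConsensus

variable {ι : Type*} [Fintype ι] (τ : ℝ) (P : ι → ℝ → ℝ) (A B : ι → ι → ℝ → ℝ)

def drift (i : ι) (t : ℝ) : ℝ :=
  ∑ j, (A i j t * (P j t - P i t) + B i j t * (P j (t - τ) - P i t))

/-- How far the opinions that agent `i` listens to at time `t` lie below the level `μ`. -/
def slack (μ : ℝ) (i : ι) (t : ℝ) : ℝ :=
  ∑ j, (A i j t * (μ - P j t) + B i j t * (μ - P j (t - τ)))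

structure IsDelayedConsensus (K : ℝ) (S : Set ι) : Prop where
  continuous : ∀ i, Continuous (P i)
  hasDerivAt : ∀ i t, 0 < t → HasDerivAt (P i) (drift τ P A B i t) t
  A_nonneg : ∀ i j t, 0 ≤ A i j t
  B_nonneg : ∀ i j t, 0 ≤ B i j t
  B_eq_zero : ∀ i j t, j ∉ S → B i j t = 0
  sum_le : ∀ i t, ∑ j, (A i j t + B i j t) ≤ K

/-- The state of the system at time `t` includes the history of `S` on `[t - τ, t]`. -/
def HistoryLE (S : Set ι) (t μ : ℝ) : Prop :=
  (∀ i, P i t ≤ μ) ∧ ∀ i ∈ S, ∀ s ∈ Icc (t - τ) t, P i s ≤ μ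

variable {τ P A B} {K μ : ℝ} {S : Set ι}

lemma drift_eq_sub_slack (i : ι) (t : ℝ) :
    drift τ P A B i t = (∑ j, (A i j t + B i j t)) * (μ - P i t) - slack τ P A B μ i t := by
  simp only [drift, slack, Finset.sum_mul, ← Finset.sum_sub_distrib]
  exact Finset.sum_congr rfl fun j _ => by ring

namespace IsDelayedConsensus

lemma B_term_nonneg (hP : IsDelayedConsensus τ P A B K S) (hτ : 0 ≤ τ) {t : ℝ}
    (hH : HistoryLE τ P S t μ) (i j : ι) : 0 ≤ B i j t * (μ - P j (t - τ)) := by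
  by_cases hj : j ∈ S
  · exact mul_nonneg (hP.B_nonneg i j t)
      (sub_nonneg.2 (hH.2 j hj (t - τ) ⟨le_rfl, by linarith⟩))
  · simp [hP.B_eq_zero i j t hj]

lemma slack_term_nonneg (hP : IsDelayedConsensus τ P A B K S) (hτ : 0 ≤ τ) {t : ℝ}
    (hH : HistoryLE τ P S t μ) (i j : ι) :
    0 ≤ A i j t * (μ - P j t) + B i j t * (μ - P j (t - τ)) :=
  add_nonneg (mul_nonneg (hP.A_nonneg i j t) (sub_nonneg.2 (hH.1 j)))
    (hP.B_term_nonneg hτ hH i j)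

lemma slack_nonneg (hP : IsDelayedConsensus τ P A B K S) (hτ : 0 ≤ τ) {t : ℝ}
    (hH : HistoryLE τ P S t μ) (i : ι) : 0 ≤ slack τ P A B μ i t :=
  Finset.sum_nonneg fun j _ => hP.slack_term_nonneg hτ hH i j

lemma le_slack (hP : IsDelayedConsensus τ P A B K S) (hτ : 0 ≤ τ) {t : ℝ}
    (hH : HistoryLE τ P S t μ) (i j : ι) :
    A i j t * (μ - P j t) + B i j t * (μ - P j (t - τ)) ≤ slack τ P A B μ i t :=
  Finset.single_le_sum (f := fun j => A i j t * (μ - P j t) + B i j t * (μ - P j (t - τ)))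
    (fun j _ => hP.slack_term_nonneg hτ hH i j) (Finset.mem_univ j)

lemma drift_le (hP : IsDelayedConsensus τ P A B K S) {t : ℝ} (hH : HistoryLE τ P S t μ)
    (i : ι) : drift τ P A B i t ≤ K * (μ - P i t) - slack τ P A B μ i t := by
  rw [drift_eq_sub_slack (μ := μ)]
  gcongr
  · exact sub_nonneg.2 (hH.1 i)
  · exact hP.sum_le i t

/-- An agent at the running maximum of all opinions since `a` (and of the remembered ones) has
nonpositive drift. -/
theorem historyLE_of_le (hP : IsDelayedConsensus τ P A B K S) (hτ : 0 ≤ τ) {a t : ℝ}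
    (ha : 0 ≤ a) (hH : HistoryLE τ P S a μ) (ht : a ≤ t) : HistoryLE τ P S t μ := by
  have hpast : ∀ i ∈ S, ∀ s, a - τ ≤ s → s < a → P i s ≤ μ := fun i hi s hs hsa =>
    hH.2 i hi s ⟨hs, hsa.le⟩
  have hnow : ∀ i, ∀ t, a ≤ t → P i t ≤ μ := by
    intro i t ht
    refine le_of_deriv_nonpos_at_running_max hP.continuous
      (fun i s hs => hP.hasDerivAt i s (ha.trans_lt hs.1)) ?_ hH.1 ⟨ht, le_rfl⟩
    intro i s hs hμ hrun
    have hHs : HistoryLE τ P S s (P i s) := by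
      refine ⟨fun j => hrun j s ⟨hs.1.le, le_rfl⟩, fun j hj r hr => ?_⟩
      rcases le_or_gt a r with har | hra
      · exact hrun j r ⟨har, hr.2⟩
      · linarith [hpast j hj r (by linarith [hr.1, hs.1]) hra]
    rw [drift_eq_sub_slack (μ := P i s), sub_self, mul_zero, zero_sub, neg_nonpos]
    exact hP.slack_nonneg hτ hHs i
  refine ⟨fun i => hnow i t ht, fun i hi s hs => ?_⟩
  rcases le_or_gt a s with has | hsa
  · exact hnow i s has
  · exact hpast i hi s (by linarith [hs.1]) hsa

theorem gronwall (hP : IsDelayedConsensus τ P A B K S) (hτ : 0 ≤ τ) (hK : 0 < K) {a : ℝ}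
    (ha : 0 ≤ a) (hH : HistoryLE τ P S a μ) {i : ι} {c t₀ t : ℝ} (ht₀ : a ≤ t₀) (ht : t₀ ≤ t)
    (hc : ∀ s ∈ Ioo t₀ t, c ≤ slack τ P A B μ i s) :
    exp (-(K * (t - t₀))) * (μ - P i t₀) + c / K * (1 - exp (-(K * (t - t₀)))) ≤ μ - P i t :=
  gronwall_lower_bound hK ht (continuous_const.sub (hP.continuous i))
    (fun s hs => (hP.hasDerivAt i s (by linarith [hs.1])).const_sub μ) fun s hs => by
      have := hP.drift_le (hP.historyLE_of_le hτ ha hH (ht₀.trans hs.1.le)) i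
      simp only [Pi.sub_apply]
      linarith [hc s hs]

theorem le_sub_of_le_slack (hP : IsDelayedConsensus τ P A B K S) (hτ : 0 ≤ τ) (hK : 0 < K) {a : ℝ}
    (ha : 0 ≤ a) (hH : HistoryLE τ P S a μ) {i : ι} {c t₀ t : ℝ} (ht₀ : a ≤ t₀)
    (ht : t₀ + τ ≤ t) (hc0 : 0 ≤ c) (hc : ∀ s ∈ Ioo t₀ t, c ≤ slack τ P A B μ i s) :
    c / K * (1 - exp (-(K * τ))) ≤ μ - P i t := by
  have hG := hP.gronwall hτ hK ha hH ht₀ (by linarith) hc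
  have hfirst : 0 ≤ exp (-(K * (t - t₀))) * (μ - P i t₀) :=
    mul_nonneg (exp_pos _).le (sub_nonneg.2 ((hP.historyLE_of_le hτ ha hH ht₀).1 i))
  have hexp : exp (-(K * (t - t₀))) ≤ exp (-(K * τ)) :=
    exp_le_exp.2 (by nlinarith)
  have : c / K * (1 - exp (-(K * τ))) ≤ c / K * (1 - exp (-(K * (t - t₀)))) :=
    mul_le_mul_of_nonneg_left (by linarith) (div_nonneg hc0 hK.le)
  linarith

lemma exp_mul_le_sub (hP : IsDelayedConsensus τ P A B K S) (hτ : 0 ≤ τ) (hK : 0 < K) {a : ℝ}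
    (ha : 0 ≤ a) (hH : HistoryLE τ P S a μ) (i : ι) {t : ℝ} (ht : a ≤ t) :
    exp (-(K * (t - a))) * (μ - P i a) ≤ μ - P i t := by
  simpa using hP.gronwall hτ hK ha hH le_rfl ht (c := 0) fun s hs =>
    hP.slack_nonneg hτ (hP.historyLE_of_le hτ ha hH hs.1.le) i

lemma B_le (hP : IsDelayedConsensus τ P A B K S) (i j : ι) (t : ℝ) : B i j t ≤ K :=
  calc B i j t ≤ A i j t + B i j t := le_add_of_nonneg_left (hP.A_nonneg i j t)
    _ ≤ ∑ j, (A i j t + B i j t) :=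
      Finset.single_le_sum (f := fun j => A i j t + B i j t)
        (fun _ _ => add_nonneg (hP.A_nonneg _ _ _) (hP.B_nonneg _ _ _)) (Finset.mem_univ j)
    _ ≤ K := hP.sum_le i t

lemma mul_le_slack_of_le_A (hP : IsDelayedConsensus τ P A B K S) (hτ : 0 ≤ τ) {t γ β : ℝ}
    (hH : HistoryLE τ P S t μ) {i j : ι} (hγ : γ ≤ A i j t) (hβ : β ≤ μ - P j t)
    (hβ0 : 0 ≤ β) : γ * β ≤ slack τ P A B μ i t := by
  have := hP.le_slack hτ hH i j
  nlinarith [hP.B_term_nonneg hτ hH i j, hP.A_nonneg i j t]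

lemma mul_le_slack_of_le_B (hP : IsDelayedConsensus τ P A B K S) (hτ : 0 ≤ τ) {t γ β : ℝ}
    (hH : HistoryLE τ P S t μ) {i j : ι} (hγ : γ ≤ B i j t) (hβ : β ≤ μ - P j (t - τ))
    (hβ0 : 0 ≤ β) : γ * β ≤ slack τ P A B μ i t := by
  have := hP.le_slack hτ hH i j
  nlinarith [mul_nonneg (hP.A_nonneg i j t) (sub_nonneg.2 (hH.1 j)), hP.B_nonneg i j t]

/-- If `x₀` starts a distance `δ` below the bound `μ`, it stays below `μ` by a fixed fraction of
`δ` for a while; it pulls down every agent of `X`, and with delay the agent `y₀`, which in turn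
pulls down every agent outside `X`. -/
theorem le_sub_of_chain (hP : IsDelayedConsensus τ P A B K S) (hτ : 0 ≤ τ) {a γ δ : ℝ}
    (ha : 0 ≤ a) (hH : HistoryLE τ P S a μ) (hγ : 0 < γ) (hδ : 0 ≤ δ) {X : Set ι} {x₀ y₀ : ι}
    (hAx : ∀ i ∈ X, i ≠ x₀ → ∀ s, a ≤ s → γ ≤ A i x₀ s)
    (hBy : ∀ s, a + τ ≤ s → γ ≤ B y₀ x₀ s)
    (hAy : ∀ j ∉ X, j ≠ y₀ → ∀ s, a ≤ s → γ ≤ A j y₀ s)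
    (hx₀ : δ ≤ μ - P x₀ a) (i : ι) {t : ℝ} (ht : t ∈ Icc (a + 3 * τ) (a + 6 * τ)) :
    (γ / K * (1 - exp (-(K * τ)))) ^ 2 * (exp (-(K * (6 * τ))) * δ) ≤ μ - P i t := by
  have hHs : ∀ s, a ≤ s → HistoryLE τ P S s μ := fun s hs => hP.historyLE_of_le hτ ha hH hs
  have hγK : γ ≤ K := (hBy _ le_rfl).trans (hP.B_le _ _ _)
  have hK : 0 < K := hγ.trans_le hγK
  set ρ := γ / K * (1 - exp (-(K * τ)))
  set β := exp (-(K * (6 * τ))) * δ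
  obtain ⟨hρ0, hρ1⟩ : ρ ∈ Icc 0 1 := div_mul_one_sub_exp_mem_Icc hγ hγK hτ
  have hβ0 : 0 ≤ β := by positivity
  have hpull : ∀ {j : ι} {c t₀ t : ℝ}, a ≤ t₀ → t₀ + τ ≤ t → 0 ≤ c →
      (∀ s ∈ Ioo t₀ t, γ * c ≤ slack τ P A B μ j s) → ρ * c ≤ μ - P j t :=
    fun ht₀ ht hc hsl => by
      have := hP.le_sub_of_le_slack hτ hK ha hH ht₀ ht (mul_nonneg hγ.le hc) hsl
      convert this using 1
      ring
  have hx₀t : ∀ t ∈ Icc a (a + 6 * τ), β ≤ μ - P x₀ t := fun t ht =>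
    (mul_le_mul (exp_le_exp.2 (by nlinarith [ht.2])) hx₀ hδ (exp_pos _).le).trans
      (hP.exp_mul_le_sub hτ hK ha hH x₀ ht.1)
  have hX : ∀ i ∈ X, ∀ t ∈ Icc (a + τ) (a + 6 * τ), ρ * β ≤ μ - P i t := by
    intro i hi t ht
    by_cases hix : i = x₀
    · subst hix
      nlinarith [hx₀t t ⟨by linarith [ht.1], ht.2⟩]
    · refine hpull le_rfl ht.1 hβ0 fun s hs => ?_
      exact hP.mul_le_slack_of_le_A hτ (hHs s hs.1.le) (hAx i hi hix s hs.1.le)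
        (hx₀t s ⟨hs.1.le, by linarith [hs.2, ht.2]⟩) hβ0
  have hy₀ : ∀ t ∈ Icc (a + 2 * τ) (a + 6 * τ), ρ * β ≤ μ - P y₀ t := fun t ht =>
    hpull (by linarith) (by linarith [ht.1]) hβ0 fun s hs =>
      hP.mul_le_slack_of_le_B hτ (hHs s (by linarith [hs.1])) (hBy s hs.1.le)
        (hx₀t (s - τ) ⟨by linarith [hs.1], by linarith [hs.2, ht.2]⟩) hβ0
  have hρβ : ρ * (ρ * β) ≤ ρ * β := mul_le_of_le_one_left (mul_nonneg hρ0 hβ0) hρ1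
  rw [sq, mul_assoc]
  by_cases hiX : i ∈ X
  · linarith [hX i hiX t ⟨by linarith [ht.1], ht.2⟩]
  by_cases hiy : i = y₀
  · subst hiy
    linarith [hy₀ t ⟨by linarith [ht.1], ht.2⟩]
  refine hpull (t₀ := a + 2 * τ) (by linarith) (by linarith [ht.1]) (mul_nonneg hρ0 hβ0)
    fun s hs => ?_
  exact hP.mul_le_slack_of_le_A hτ (hHs s (by linarith [hs.1]))
    (hAy i hiX hiy s (by linarith [hs.1])) (hy₀ s ⟨hs.1.le, by linarith [hs.2, ht.2]⟩)
    (mul_nonneg hρ0 hβ0)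

end IsDelayedConsensus

end DelayedConsensus

def IsLeader {N M : ℕ} (h k : ℕ) : Fin N ⊕ Fin M → Prop
  | .inl i => (i : ℕ) < k
  | .inr j => (j : ℕ) < h

/-- The instantaneous weights: the paper's `a_ij` within the first population and `b_ij` within
the second. -/
def hkA {d N M : ℕ} (h k : ℕ)
    (ψ ψs : EuclideanSpace ℝ (Fin d) → EuclideanSpace ℝ (Fin d) → ℝ)
    (x : Fin N → ℝ → EuclideanSpace ℝ (Fin d)) (y : Fin M → ℝ → EuclideanSpace ℝ (Fin d)) :
    Fin N ⊕ Fin M → Fin N ⊕ Fin M → ℝ → ℝ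
  | .inl i, .inl j, t => if j ≠ i then
      ψ (x i t) (x j t) / (if (i : ℕ) < k then (N : ℝ) + h - 1 else (N : ℝ) - 1) else 0
  | .inr i, .inr j, t => if j ≠ i then
      ψs (y i t) (y j t) / (if (i : ℕ) < h then (M : ℝ) + k - 1 else (M : ℝ) - 1) else 0
  | _, _, _ => 0

/-- The delayed weights: the paper's `ε_ij` (a leader of the first population hearing a leader of
the second) and `η_ij`. -/
def hkB {d N M : ℕ} (h k : ℕ) (τ : ℝ)
    (φ φs : EuclideanSpace ℝ (Fin d) → EuclideanSpace ℝ (Fin d) → ℝ)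
    (x : Fin N → ℝ → EuclideanSpace ℝ (Fin d)) (y : Fin M → ℝ → EuclideanSpace ℝ (Fin d)) :
    Fin N ⊕ Fin M → Fin N ⊕ Fin M → ℝ → ℝ
  | .inl i, .inr j, t => if (i : ℕ) < k ∧ (j : ℕ) < h then
      φ (x i t) (y j (t - τ)) / ((N : ℝ) + h - 1) else 0
  | .inr i, .inl j, t => if (i : ℕ) < h ∧ (j : ℕ) < k then
      φs (y i t) (x j (t - τ)) / ((M : ℝ) + k - 1) else 0
  | _, _, _ => 0

def hkProj {d N M : ℕ} (x : Fin N → ℝ → EuclideanSpace ℝ (Fin d))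
    (y : Fin M → ℝ → EuclideanSpace ℝ (Fin d)) (w : EuclideanSpace ℝ (Fin d)) :
    Fin N ⊕ Fin M → ℝ → ℝ :=
  fun b t => ⟪Sum.elim x y b t, w⟫

section Projection

variable {d N M h k : ℕ} {τ : ℝ}
  {ψ ψs φ φs : EuclideanSpace ℝ (Fin d) → EuclideanSpace ℝ (Fin d) → ℝ}
  {x : Fin N → ℝ → EuclideanSpace ℝ (Fin d)} {y : Fin M → ℝ → EuclideanSpace ℝ (Fin d)}

lemma psi_le_Lam (hψ : Admissible ψ) (z₁ z₂ : EuclideanSpace ℝ (Fin d)) :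
    ψ z₁ z₂ ≤ Lam ψ ψs φ φs :=
  (le_ciSup hψ.2.2 (z₁, z₂)).trans ((le_max_left _ _).trans (le_max_left _ _))

lemma psis_le_Lam (hψs : Admissible ψs) (z₁ z₂ : EuclideanSpace ℝ (Fin d)) :
    ψs z₁ z₂ ≤ Lam ψ ψs φ φs :=
  (le_ciSup hψs.2.2 (z₁, z₂)).trans ((le_max_right _ _).trans (le_max_left _ _))

lemma phi_le_Lam (hφ : Admissible φ) (z₁ z₂ : EuclideanSpace ℝ (Fin d)) :
    φ z₁ z₂ ≤ Lam ψ ψs φ φs :=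
  (le_ciSup hφ.2.2 (z₁, z₂)).trans ((le_max_left _ _).trans (le_max_right _ _))

lemma phis_le_Lam (hφs : Admissible φs) (z₁ z₂ : EuclideanSpace ℝ (Fin d)) :
    φs z₁ z₂ ≤ Lam ψ ψs φ φs :=
  (le_ciSup hφs.2.2 (z₁, z₂)).trans ((le_max_right _ _).trans (le_max_right _ _))

namespace IsSol

lemma hasDerivAt_hkProj (hsol : IsSol h k τ ψ ψs φ φs x y) (w : EuclideanSpace ℝ (Fin d))
    (b : Fin N ⊕ Fin M) {t : ℝ} (ht : 0 < t) :
    HasDerivAt (hkProj x y w b)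
      (drift τ (hkProj x y w) (hkA h k ψ ψs x y) (hkB h k τ φ φs x y) b t) t := by
  have hsum : ∀ {n : ℕ} (i : Fin n) (f : Fin n → ℝ),
      ∑ j ∈ Finset.univ.erase i, f j = ∑ j, if j ≠ i then f j else 0 := fun i f => by
    rw [← Finset.filter_ne', Finset.sum_filter]
  rcases b with i | i
  · by_cases hi : (i : ℕ) < k
    · refine ((hsol.odex_lead i hi t ht).inner_const_right w).congr_deriv ?_
      simp only [drift, Fintype.sum_sum_type, hkA, hkB, hkProj, Sum.elim_inl, Sum.elim_inr, hi,
        if_true, true_and, inner_add_left, sum_inner, real_inner_smul_left, inner_sub_left, hsum,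
        Finset.sum_filter, zero_mul, add_zero, zero_add, ite_mul]
      congr 1
      exact Finset.sum_congr rfl fun j _ => by
        split_ifs <;> simp [real_inner_smul_left, inner_sub_left]
    · refine ((hsol.odex_foll i (not_lt.1 hi) t ht).inner_const_right w).congr_deriv ?_
      simp [drift, Fintype.sum_sum_type, hkA, hkB, hkProj, hi, sum_inner, real_inner_smul_left,
        inner_sub_left, ite_mul]
      exact Finset.sum_congr rfl fun j _ => by split_ifs <;> simp_all
  · by_cases hi : (i : ℕ) < h
    · refine ((hsol.odey_lead i hi t ht).inner_const_right w).congr_deriv ?_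
      simp only [drift, Fintype.sum_sum_type, hkA, hkB, hkProj, Sum.elim_inl, Sum.elim_inr, hi,
        if_true, true_and, inner_add_left, sum_inner, real_inner_smul_left, inner_sub_left, hsum,
        Finset.sum_filter, zero_mul, add_zero, zero_add, ite_mul]
      rw [add_comm]
      congr 1
      exact Finset.sum_congr rfl fun j _ => by
        split_ifs <;> simp [real_inner_smul_left, inner_sub_left]
    · refine ((hsol.odey_foll i (not_lt.1 hi) t ht).inner_const_right w).congr_deriv ?_
      simp [drift, Fintype.sum_sum_type, hkA, hkB, hkProj, hi, sum_inner, real_inner_smul_left,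
        inner_sub_left, ite_mul]
      exact Finset.sum_congr rfl fun j _ => by split_ifs <;> simp_all

end IsSol

lemma sum_hkA_add_hkB_le (hψ : Admissible ψ) (hψs : Admissible ψs) (hφ : Admissible φ)
    (hφs : Admissible φs) (hh1 : 1 ≤ h) (hhM : h < M) (hk1 : 1 ≤ k) (hkN : k < N)
    (b : Fin N ⊕ Fin M) (t : ℝ) :
    ∑ j, (hkA h k ψ ψs x y b j t + hkB h k τ φ φs x y b j t) ≤ Lam ψ ψs φ φs := by
  rw [Finset.sum_add_distrib]
  rcases b with i | i
  · simp only [Fintype.sum_sum_type, hkA, hkB, Finset.sum_const_zero, add_zero, zero_add]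
    by_cases hi : (i : ℕ) < k
    · simp only [hi, if_true, true_and]
      exact sum_ite_ne_add_sum_ite_lt_div_le i hh1 hhM.le (fun j => psi_le_Lam hψ _ _)
        fun j => phi_le_Lam hφ _ _
    · simp only [hi, if_false, false_and, Finset.sum_const_zero, add_zero]
      exact sum_ite_ne_div_le i (by omega) fun j => psi_le_Lam hψ _ _
  · simp only [Fintype.sum_sum_type, hkA, hkB, Finset.sum_const_zero, add_zero, zero_add]
    by_cases hi : (i : ℕ) < h
    · simp only [hi, if_true, true_and]
      exact sum_ite_ne_add_sum_ite_lt_div_le i hk1 hkN.le (fun j => psis_le_Lam hψs _ _)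
        fun j => phis_le_Lam hφs _ _
    · simp only [hi, if_false, false_and, Finset.sum_const_zero, add_zero]
      exact sum_ite_ne_div_le i (by omega) fun j => psis_le_Lam hψs _ _

lemma IsSol.continuous_elim (hsol : IsSol h k τ ψ ψs φ φs x y) :
    ∀ b, Continuous (Sum.elim x y b)
  | .inl i => hsol.contx i
  | .inr j => hsol.conty j

theorem IsSol.isDelayedConsensus (hsol : IsSol h k τ ψ ψs φ φs x y) (hψ : Admissible ψ)
    (hψs : Admissible ψs) (hφ : Admissible φ) (hφs : Admissible φs) (hh1 : 1 ≤ h) (hhM : h < M)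
    (hk1 : 1 ≤ k) (hkN : k < N) (w : EuclideanSpace ℝ (Fin d)) :
    IsDelayedConsensus τ (hkProj x y w) (hkA h k ψ ψs x y) (hkB h k τ φ φs x y)
      (Lam ψ ψs φ φs) {b | IsLeader h k b} where
  continuous b := (hsol.continuous_elim b).inner continuous_const
  hasDerivAt b _ ht := hsol.hasDerivAt_hkProj w b ht
  A_nonneg := by
    have hN : (1 : ℝ) ≤ N := by exact_mod_cast (show 1 ≤ N by omega)
    have hM : (1 : ℝ) ≤ M := by exact_mod_cast (show 1 ≤ M by omega)
    rintro (i | i) (j | j) t <;> simp only [hkA, le_refl]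
    · split_ifs <;> first | exact le_rfl | exact div_nonneg (hψ.2.1 _ _).le (by linarith)
    · split_ifs <;> first | exact le_rfl | exact div_nonneg (hψs.2.1 _ _).le (by linarith)
  B_nonneg := by
    have hN : (1 : ℝ) ≤ N := by exact_mod_cast (show 1 ≤ N by omega)
    have hM : (1 : ℝ) ≤ M := by exact_mod_cast (show 1 ≤ M by omega)
    rintro (i | i) (j | j) t <;> simp only [hkB, le_refl]
    · split_ifs <;> first | exact le_rfl | exact div_nonneg (hφ.2.1 _ _).le (by linarith)
    · split_ifs <;> first | exact le_rfl | exact div_nonneg (hφs.2.1 _ _).le (by linarith)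
  B_eq_zero := by rintro (i | i) (j | j) t hj <;> simp_all [hkB, IsLeader]
  sum_le := sum_hkA_add_hkB_le hψ hψs hφ hφs hh1 hhM hk1 hkN

variable (h k τ ψ ψs φ φs x y) in
def ProjectionsAreConsensus : Prop :=
  ∀ w, IsDelayedConsensus τ (hkProj x y w) (hkA h k ψ ψs x y) (hkB h k τ φ φs x y)
    (Lam ψ ψs φ φs) {b | IsLeader h k b}


end Projection

/-- Leaders are observed on the whole window `[a, b]`, followers only at its end; `M_n` is the case
`F = hkProj x y v`, `[a, b] = I_n`. -/
def obsSup {N M : ℕ} (h k : ℕ) (a b : ℝ) (F : Fin N ⊕ Fin M → ℝ → ℝ) : ℝ :=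
  max (max (⨆ p : {i : Fin N // (i : ℕ) < k} × Icc a b, F (.inl p.1.1) p.2)
           (⨆ i : {i : Fin N // k ≤ (i : ℕ)}, F (.inl i.1) b))
      (max (⨆ p : {j : Fin M // (j : ℕ) < h} × Icc a b, F (.inr p.1.1) p.2)
           (⨆ j : {j : Fin M // h ≤ (j : ℕ)}, F (.inr j.1) b))

section ObsSup

variable {N M h k : ℕ} {a b : ℝ} {F : Fin N ⊕ Fin M → ℝ → ℝ}

lemma bddAbove_range_prod_Icc {κ : Type*} [TopologicalSpace κ] [DiscreteTopology κ] [Finite κ]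
    (g : κ → ℝ → ℝ) (hg : ∀ i, Continuous (g i)) :
    BddAbove (range fun p : κ × Icc a b => g p.1 p.2) :=
  (isCompact_range (continuous_prod_of_discrete_left.2 fun i =>
    (hg i).comp continuous_subtype_val : Continuous fun p : κ × Icc a b => g p.1 p.2)).bddAbove

lemma le_obsSup_of_isLeader (hF : ∀ c, Continuous (F c)) {c : Fin N ⊕ Fin M}
    (hc : IsLeader h k c) {t : ℝ} (ht : t ∈ Icc a b) : F c t ≤ obsSup h k a b F := by
  rcases c with i | j
  · refine le_trans ?_ ((le_max_left _ _).trans (le_max_left _ _))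
    exact le_ciSup (f := fun p : {i : Fin N // (i : ℕ) < k} × Icc a b => F (.inl p.1.1) p.2)
      (bddAbove_range_prod_Icc (fun (i : {i : Fin N // (i : ℕ) < k}) t => F (.inl i.1) t)
        fun i => hF _) (⟨i, hc⟩, ⟨t, ht⟩)
  · refine le_trans ?_ ((le_max_left _ _).trans (le_max_right _ _))
    exact le_ciSup (f := fun p : {j : Fin M // (j : ℕ) < h} × Icc a b => F (.inr p.1.1) p.2)
      (bddAbove_range_prod_Icc (fun (j : {j : Fin M // (j : ℕ) < h}) t => F (.inr j.1) t)
        fun j => hF _) (⟨j, hc⟩, ⟨t, ht⟩)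

lemma le_obsSup_right (hF : ∀ c, Continuous (F c)) (hab : a ≤ b) (c : Fin N ⊕ Fin M) :
    F c b ≤ obsSup h k a b F := by
  by_cases hc : IsLeader h k c
  · exact le_obsSup_of_isLeader hF hc ⟨hab, le_rfl⟩
  rcases c with i | j
  · refine le_trans ?_ ((le_max_right _ _).trans (le_max_left _ _))
    exact le_ciSup (f := fun i : {i : Fin N // k ≤ (i : ℕ)} => F (.inl i.1) b)
      (Finite.bddAbove_range _) ⟨i, not_lt.1 hc⟩
  · refine le_trans ?_ ((le_max_right _ _).trans (le_max_right _ _))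
    exact le_ciSup (f := fun j : {j : Fin M // h ≤ (j : ℕ)} => F (.inr j.1) b)
      (Finite.bddAbove_range _) ⟨j, not_lt.1 hc⟩

lemma historyLE_obsSup {τ : ℝ} (hF : ∀ c, Continuous (F c)) (hτ : 0 ≤ τ) :
    HistoryLE τ F {c | IsLeader h k c} b (obsSup h k (b - τ) b F) :=
  ⟨le_obsSup_right hF (by linarith), fun _ hc _ hs => le_obsSup_of_isLeader hF hc hs⟩

lemma obsSup_le (hh1 : 1 ≤ h) (hhM : h < M) (hk1 : 1 ≤ k) (hkN : k < N) (hab : a ≤ b) {β : ℝ}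
    (hβ : ∀ c, ∀ t ∈ Icc a b, F c t ≤ β) : obsSup h k a b F ≤ β := by
  have : Nonempty (Icc a b) := nonempty_Icc_subtype hab
  have : Nonempty {i : Fin N // (i : ℕ) < k} := ⟨⟨⟨0, by omega⟩, by simp; omega⟩⟩
  have : Nonempty {i : Fin N // k ≤ (i : ℕ)} := ⟨⟨⟨k, hkN⟩, le_rfl⟩⟩
  have : Nonempty {j : Fin M // (j : ℕ) < h} := ⟨⟨⟨0, by omega⟩, by simp; omega⟩⟩
  have : Nonempty {j : Fin M // h ≤ (j : ℕ)} := ⟨⟨⟨h, hhM⟩, le_rfl⟩⟩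
  refine max_le (max_le ?_ ?_) (max_le ?_ ?_) <;> refine ciSup_le fun p => ?_
  exacts [hβ _ _ p.2.2, hβ _ _ ⟨hab, le_rfl⟩, hβ _ _ p.2.2, hβ _ _ ⟨hab, le_rfl⟩]

end ObsSup

section Gam

variable {d N M h k : ℕ} {τ C : ℝ}
  {f ψ ψs φ φs : EuclideanSpace ℝ (Fin d) → EuclideanSpace ℝ (Fin d) → ℝ}
  {x : Fin N → ℝ → EuclideanSpace ℝ (Fin d)} {y : Fin M → ℝ → EuclideanSpace ℝ (Fin d)}
  {z₁ z₂ : EuclideanSpace ℝ (Fin d)}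

lemma minOnBall_le (hf : Admissible f) (h₁ : ‖z₁‖ ≤ C) (h₂ : ‖z₂‖ ≤ C) :
    minOnBall C f ≤ f z₁ z₂ :=
  ciInf_le (f := fun p : {z : EuclideanSpace ℝ (Fin d) × EuclideanSpace ℝ (Fin d) //
      ‖z.1‖ ≤ C ∧ ‖z.2‖ ≤ C} => f p.1.1 p.1.2)
    ⟨0, by rintro _ ⟨p, rfl⟩; exact (hf.2.1 _ _).le⟩ ⟨(z₁, z₂), h₁, h₂⟩

/-- On the compact ball the continuous positive `f` attains its infimum. -/
lemma minOnBall_pos (hf : Admissible f) (hC : 0 ≤ C) : 0 < minOnBall C f := by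
  have hcpt : IsCompact (Metric.closedBall (0 : EuclideanSpace ℝ (Fin d)) C ×ˢ
      Metric.closedBall (0 : EuclideanSpace ℝ (Fin d)) C) :=
    (isCompact_closedBall _ _).prod (isCompact_closedBall _ _)
  obtain ⟨p, -, hp⟩ := hcpt.exists_isMinOn ⟨(0, 0), by simp [hC]⟩ hf.1.continuousOn
  have : Nonempty {z : EuclideanSpace ℝ (Fin d) × EuclideanSpace ℝ (Fin d) //
      ‖z.1‖ ≤ C ∧ ‖z.2‖ ≤ C} := ⟨⟨(0, 0), by simp [hC]⟩⟩
  refine (hf.2.1 p.1 p.2).trans_le (le_ciInf fun q => hp ?_)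
  simpa [Metric.mem_closedBall, dist_eq_norm] using q.2

lemma Gam_pos (hψ : Admissible ψ) (hψs : Admissible ψs) (hφ : Admissible φ)
    (hφs : Admissible φs) (hC : 0 ≤ Cinit h k τ x y) : 0 < Gam h k τ ψ ψs φ φs x y :=
  lt_min (lt_min (minOnBall_pos hψ hC) (minOnBall_pos hψs hC))
    (lt_min (minOnBall_pos hφ hC) (minOnBall_pos hφs hC))

lemma Gam_le_psi (hψ : Admissible ψ) (h₁ : ‖z₁‖ ≤ Cinit h k τ x y)
    (h₂ : ‖z₂‖ ≤ Cinit h k τ x y) : Gam h k τ ψ ψs φ φs x y ≤ ψ z₁ z₂ :=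
  (min_le_left _ _).trans ((min_le_left _ _).trans (minOnBall_le hψ h₁ h₂))

lemma Gam_le_psis (hψs : Admissible ψs) (h₁ : ‖z₁‖ ≤ Cinit h k τ x y)
    (h₂ : ‖z₂‖ ≤ Cinit h k τ x y) : Gam h k τ ψ ψs φ φs x y ≤ ψs z₁ z₂ :=
  (min_le_left _ _).trans ((min_le_right _ _).trans (minOnBall_le hψs h₁ h₂))

lemma Gam_le_phis (hφs : Admissible φs) (h₁ : ‖z₁‖ ≤ Cinit h k τ x y)
    (h₂ : ‖z₂‖ ≤ Cinit h k τ x y) : Gam h k τ ψ ψs φ φs x y ≤ φs z₁ z₂ :=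
  (min_le_right _ _).trans ((min_le_right _ _).trans (minOnBall_le hφs h₁ h₂))

end Gam

/-- `ρ ^ 2 e^{-6Kτ} / 2`, where `ρ = γ (1 - e^{-Kτ}) / K` is the fraction of a gap that one link
of weight `γ` hands on within time `τ`. -/
def contractionRate (γ K τ : ℝ) : ℝ :=
  (γ / K * (1 - exp (-(K * τ)))) ^ 2 * exp (-(K * (6 * τ))) / 2

lemma contractionRate_pos {γ K τ : ℝ} (hγ : 0 < γ) (hK : 0 < K) (hτ : 0 < τ) :
    0 < contractionRate γ K τ := by
  have : exp (-(K * τ)) < 1 := exp_lt_one_iff.2 (by nlinarith)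
  unfold contractionRate
  have : 0 < γ / K * (1 - exp (-(K * τ))) := mul_pos (div_pos hγ hK) (by linarith)
  positivity

lemma contractionRate_le_one {γ K τ : ℝ} (hγ : 0 < γ) (hγK : γ ≤ K) (hτ : 0 ≤ τ) :
    contractionRate γ K τ ≤ 1 := by
  obtain ⟨hρ0, hρ1⟩ := div_mul_one_sub_exp_mem_Icc hγ hγK hτ
  have h6 : exp (-(K * (6 * τ))) ≤ 1 := exp_le_one_iff.2 (by nlinarith [hγ.trans_le hγK])
  unfold contractionRate
  have : (γ / K * (1 - exp (-(K * τ)))) ^ 2 ≤ 1 := pow_le_one₀ hρ0 hρ1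
  nlinarith [exp_pos (-(K * (6 * τ)))]

section HegselmannKrause

variable {d N M h k : ℕ} {τ : ℝ}
  {ψ ψs φ φs : EuclideanSpace ℝ (Fin d) → EuclideanSpace ℝ (Fin d) → ℝ}
  {x : Fin N → ℝ → EuclideanSpace ℝ (Fin d)} {y : Fin M → ℝ → EuclideanSpace ℝ (Fin d)}

lemma MSeq_eq_obsSup (w : EuclideanSpace ℝ (Fin d)) (n : ℕ) :
    MSeq h k τ w x y n = obsSup h k (6 * n * τ - τ) (6 * n * τ) (hkProj x y w) := by
  rw [show 6 * (n : ℝ) * τ - τ = (6 * n - 1) * τ by ring]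
  rfl

lemma mSeq_eq_neg_MSeq (w : EuclideanSpace ℝ (Fin d)) (n : ℕ) :
    mSeq h k τ w x y n = -MSeq h k τ (-w) x y n := by
  have hsup : ∀ {ι : Type} (f : ι → ℝ), ⨆ i, -f i = -⨅ i, f i := fun f => by
    simpa using (Real.mul_iInf_of_nonpos (r := -1) (by norm_num) f).symm
  simp only [mSeq, MSeq, inner_neg_right, hsup, max_neg_neg, neg_neg]

lemma hkProj_neg (w : EuclideanSpace ℝ (Fin d)) (b : Fin N ⊕ Fin M) (t : ℝ) :
    hkProj x y (-w) b t = -hkProj x y w b t :=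
  inner_neg_right _ _

lemma Cinit_eq_obsSup :
    Cinit h k τ x y = obsSup h k (0 - τ) 0 (fun b t => ‖Sum.elim x y b t‖) := by
  rw [zero_sub]
  rfl

/-- Bounding `⟪z, w⟫` by `C ‖w‖` for every `w` and testing with `w = z` bounds `‖z‖`. -/
theorem IsSol.norm_le_Cinit (hsol : IsSol h k τ ψ ψs φ φs x y)
    (hP : ProjectionsAreConsensus h k τ ψ ψs φ φs x y) (hτ : 0 ≤ τ) (b : Fin N ⊕ Fin M)
    {t : ℝ} (ht : 0 ≤ t) : ‖Sum.elim x y b t‖ ≤ Cinit h k τ x y := by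
  set C := Cinit h k τ x y
  have hnorm : HistoryLE τ (fun b t => ‖Sum.elim x y b t‖) {b | IsLeader h k b} 0 C := by
    rw [show C = _ from Cinit_eq_obsSup]
    exact historyLE_obsSup (fun b => (hsol.continuous_elim b).norm) hτ
  have hC : 0 ≤ C := (norm_nonneg _).trans (hnorm.1 b)
  have hinner : ∀ w, hkProj x y w b t ≤ C * ‖w‖ := fun w => by
    have hle : ∀ c s, ‖Sum.elim x y c s‖ ≤ C → hkProj x y w c s ≤ C * ‖w‖ := fun c s hcs =>
      (real_inner_le_norm _ _).trans (mul_le_mul_of_nonneg_right hcs (norm_nonneg w))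
    have h0 : HistoryLE τ (hkProj x y w) {b | IsLeader h k b} 0 (C * ‖w‖) :=
      ⟨fun c => hle c 0 (hnorm.1 c), fun c hc s hs => hle c s (hnorm.2 c hc s hs)⟩
    exact ((hP w).historyLE_of_le hτ le_rfl h0 ht).1 b
  have hself := hinner (Sum.elim x y b t)
  rw [hkProj, real_inner_self_eq_norm_sq] at hself
  nlinarith [norm_nonneg (Sum.elim x y b t)]

lemma historyLE_MSeq (hP : ProjectionsAreConsensus h k τ ψ ψs φ φs x y) (hτ : 0 ≤ τ)
    (w : EuclideanSpace ℝ (Fin d)) (n : ℕ) :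
    HistoryLE τ (hkProj x y w) {b | IsLeader h k b} (6 * n * τ) (MSeq h k τ w x y n) := by
  rw [MSeq_eq_obsSup]
  exact historyLE_obsSup (hP w).continuous hτ

lemma hkProj_le_MSeq (hP : ProjectionsAreConsensus h k τ ψ ψs φ φs x y) (hτ : 0 ≤ τ)
    (w : EuclideanSpace ℝ (Fin d)) (n : ℕ) (b : Fin N ⊕ Fin M) {t : ℝ} (ht : 6 * n * τ ≤ t) :
    hkProj x y w b t ≤ MSeq h k τ w x y n :=
  ((hP w).historyLE_of_le hτ (by positivity) (historyLE_MSeq hP hτ w n) ht).1 b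

lemma mSeq_le_hkProj (hP : ProjectionsAreConsensus h k τ ψ ψs φ φs x y) (hτ : 0 ≤ τ)
    (w : EuclideanSpace ℝ (Fin d)) (n : ℕ) (b : Fin N ⊕ Fin M) {t : ℝ} (ht : 6 * n * τ ≤ t) :
    mSeq h k τ w x y n ≤ hkProj x y w b t := by
  have := hkProj_le_MSeq hP hτ (-w) n b ht
  rw [hkProj_neg] at this
  rw [mSeq_eq_neg_MSeq]
  linarith

lemma MSeq_succ_le (hP : ProjectionsAreConsensus h k τ ψ ψs φ φs x y) (hh1 : 1 ≤ h)
    (hhM : h < M) (hk1 : 1 ≤ k) (hkN : k < N) (hτ : 0 ≤ τ) (w : EuclideanSpace ℝ (Fin d))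
    (n : ℕ) : MSeq h k τ w x y (n + 1) ≤ MSeq h k τ w x y n := by
  rw [MSeq_eq_obsSup (n := n + 1)]
  exact obsSup_le hh1 hhM hk1 hkN (by linarith) fun b t ht =>
    hkProj_le_MSeq hP hτ w n b (by push_cast at ht; linarith [ht.1])

lemma mSeq_le_MSeq (hP : ProjectionsAreConsensus h k τ ψ ψs φ φs x y) (hτ : 0 ≤ τ)
    (w : EuclideanSpace ℝ (Fin d)) (n : ℕ) (b : Fin N ⊕ Fin M) :
    mSeq h k τ w x y n ≤ MSeq h k τ w x y n :=
  (mSeq_le_hkProj hP hτ w n b le_rfl).trans (hkProj_le_MSeq hP hτ w n b le_rfl)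

lemma Gam_div_le_hkA_inl (hψ : Admissible ψ) (hh1 : 1 ≤ h) (hhM : h < M) (hk1 : 1 ≤ k)
    (hkN : k < N) {i j : Fin N} (hji : j ≠ i) {t : ℝ} (hi : ‖x i t‖ ≤ Cinit h k τ x y)
    (hj : ‖x j t‖ ≤ Cinit h k τ x y) :
    Gam h k τ ψ ψs φ φs x y / (N + M) ≤ hkA h k ψ ψs x y (.inl i) (.inl j) t := by
  have hN : (2 : ℝ) ≤ N := by exact_mod_cast (show 2 ≤ N by omega)
  have hh : (1 : ℝ) ≤ h := by exact_mod_cast hh1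
  have hhM : (h : ℝ) ≤ M := by exact_mod_cast hhM.le
  simp only [hkA, if_pos hji]
  refine div_le_div₀ (hψ.2.1 _ _).le (Gam_le_psi hψ hi hj) ?_ ?_ <;> split_ifs <;> linarith

lemma Gam_div_le_hkA_inr (hψs : Admissible ψs) (hh1 : 1 ≤ h) (hhM : h < M) (hk1 : 1 ≤ k)
    (hkN : k < N) {i j : Fin M} (hji : j ≠ i) {t : ℝ} (hi : ‖y i t‖ ≤ Cinit h k τ x y)
    (hj : ‖y j t‖ ≤ Cinit h k τ x y) :
    Gam h k τ ψ ψs φ φs x y / (N + M) ≤ hkA h k ψ ψs x y (.inr i) (.inr j) t := by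
  have hM : (2 : ℝ) ≤ M := by exact_mod_cast (show 2 ≤ M by omega)
  have hk : (1 : ℝ) ≤ k := by exact_mod_cast hk1
  have hkN : (k : ℝ) ≤ N := by exact_mod_cast hkN.le
  simp only [hkA, if_pos hji]
  refine div_le_div₀ (hψs.2.1 _ _).le (Gam_le_psis hψs hi hj) ?_ ?_ <;> split_ifs <;> linarith

lemma Gam_div_le_hkB (hφs : Admissible φs) (hk1 : 1 ≤ k) (hkN : k < N) {i : Fin M} {j : Fin N}
    (hi : (i : ℕ) < h) (hj : (j : ℕ) < k) {t : ℝ}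
    (hyi : ‖y i t‖ ≤ Cinit h k τ x y) (hxj : ‖x j (t - τ)‖ ≤ Cinit h k τ x y) :
    Gam h k τ ψ ψs φ φs x y / (N + M) ≤ hkB h k τ φ φs x y (.inr i) (.inl j) t := by
  have hM : (1 : ℝ) ≤ M := by exact_mod_cast i.pos
  have hk : (1 : ℝ) ≤ k := by exact_mod_cast hk1
  have hkN : (k : ℝ) ≤ N := by exact_mod_cast hkN.le
  simp only [hkB, if_pos (And.intro hi hj)]
  exact div_le_div₀ (hφs.2.1 _ _).le (Gam_le_phis hφs hyi hxj) (by linarith) (by linarith)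

/-- If the leader `x₀` sits in the lower half of the band at time `6nτ`, the chain
`x₀ → x`, `x₀ ⇝ y₀` (delayed), `y₀ → y` lowers the top of the band. -/
theorem MSeq_succ_le_sub (hsol : IsSol h k τ ψ ψs φ φs x y)
    (hP : ProjectionsAreConsensus h k τ ψ ψs φ φs x y) (hψ : Admissible ψ)
    (hψs : Admissible ψs) (hφ : Admissible φ) (hφs : Admissible φs) (hh1 : 1 ≤ h)
    (hhM : h < M) (hk1 : 1 ≤ k) (hkN : k < N) (hτ : 0 ≤ τ) (w : EuclideanSpace ℝ (Fin d))
    (n : ℕ) {x₀ : Fin N} (hx₀ : (x₀ : ℕ) < k)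
    (hmid : 2 * hkProj x y w (.inl x₀) (6 * n * τ) ≤ MSeq h k τ w x y n - MSeq h k τ (-w) x y n) :
    MSeq h k τ w x y (n + 1) ≤ MSeq h k τ w x y n -
      contractionRate (Gam h k τ ψ ψs φ φs x y / (N + M)) (Lam ψ ψs φ φs) τ *
        (MSeq h k τ w x y n + MSeq h k τ (-w) x y n) := by
  set a := 6 * (n : ℝ) * τ
  set D := MSeq h k τ w x y n + MSeq h k τ (-w) x y n
  have ha : 0 ≤ a := by positivity
  have hC : ∀ b s, 0 ≤ s → ‖Sum.elim x y b s‖ ≤ Cinit h k τ x y := fun b s hs =>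
    hsol.norm_le_Cinit hP hτ b hs
  have hΓ : 0 < Gam h k τ ψ ψs φ φs x y :=
    Gam_pos hψ hψs hφ hφs ((norm_nonneg _).trans (hC (.inl x₀) 0 le_rfl))
  have hD : 0 ≤ D := by
    have := mSeq_le_MSeq hP hτ w n (.inl x₀)
    rw [mSeq_eq_neg_MSeq] at this
    linarith
  have hNM : (0 : ℝ) < N + M := by exact_mod_cast (show 0 < N + M by omega)
  set y₀ : Fin M := ⟨0, by omega⟩
  have hchain := (hP w).le_sub_of_chain hτ ha (historyLE_MSeq hP hτ w n)
    (div_pos hΓ hNM) (div_nonneg hD zero_le_two) (X := range Sum.inl)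
    (x₀ := .inl x₀) (y₀ := .inr y₀)
    (by
      rintro _ ⟨i, rfl⟩ hi s hs
      exact Gam_div_le_hkA_inl hψ hh1 hhM hk1 hkN (by rintro rfl; exact hi rfl)
        (hC (.inl i) s (ha.trans hs)) (hC (.inl x₀) s (ha.trans hs)))
    (fun s hs => Gam_div_le_hkB hφs hk1 hkN (show (y₀ : ℕ) < h by simp [y₀]; omega)
      hx₀ (hC (.inr y₀) s (by linarith)) (hC (.inl x₀) (s - τ) (by linarith)))
    (by
      rintro (j | j) hj hjy s hs
      · exact absurd ⟨j, rfl⟩ hj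
      · exact Gam_div_le_hkA_inr hψs hh1 hhM hk1 hkN (by rintro rfl; exact hjy rfl)
          (hC (.inr j) s (ha.trans hs)) (hC (.inr y₀) s (ha.trans hs)))
    (by linarith)
  rw [MSeq_eq_obsSup (n := n + 1)]
  refine obsSup_le hh1 hhM hk1 hkN (by linarith) fun b t ht => ?_
  push_cast at ht
  have := hchain b (t := t) ⟨by linarith [ht.1], by linarith [ht.2]⟩
  have hrate : contractionRate (Gam h k τ ψ ψs φ φs x y / (N + M)) (Lam ψ ψs φ φs) τ * D =
      (Gam h k τ ψ ψs φ φs x y / (N + M) / Lam ψ ψs φ φs * (1 - exp (-(Lam ψ ψs φ φs * τ)))) ^ 2 *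
        (exp (-(Lam ψ ψs φ φs * (6 * τ))) * (D / 2)) := by
    unfold contractionRate; ring
  linarith


/-- Depending on the half of the band that `x₀` is in, `MSeq_succ_le_sub` applies to `w` or to
`-w`. -/
theorem exists_contraction (hsol : IsSol h k τ ψ ψs φ φs x y) (hψ : Admissible ψ)
    (hψs : Admissible ψs) (hφ : Admissible φ) (hφs : Admissible φs) (hh1 : 1 ≤ h)
    (hhM : h < M) (hk1 : 1 ≤ k) (hkN : k < N) (hτ : 0 < τ) (w : EuclideanSpace ℝ (Fin d)) :
    ∃ r, 0 ≤ r ∧ r < 1 ∧ ∀ n, MSeq h k τ w x y (n + 1) - mSeq h k τ w x y (n + 1) ≤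
      r * (MSeq h k τ w x y n - mSeq h k τ w x y n) := by
  have hP : ProjectionsAreConsensus h k τ ψ ψs φ φs x y :=
    hsol.isDelayedConsensus hψ hψs hφ hφs hh1 hhM hk1 hkN
  set x₀ : Fin N := ⟨0, by omega⟩
  have hx₀ : (x₀ : ℕ) < k := by simp [x₀]; omega
  have hC := hsol.norm_le_Cinit hP hτ.le (.inl x₀) le_rfl
  have hΓ := Gam_pos hψ hψs hφ hφs ((norm_nonneg _).trans hC)
  have hNM : (1 : ℝ) ≤ N + M := by exact_mod_cast (show 1 ≤ N + M by omega)
  set ε := contractionRate (Gam h k τ ψ ψs φ φs x y / (N + M)) (Lam ψ ψs φ φs) τ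
  have hC₀ : ‖(0 : EuclideanSpace ℝ (Fin d))‖ ≤ Cinit h k τ x y := by
    simpa using (norm_nonneg _).trans hC
  have hγ : 0 < Gam h k τ ψ ψs φ φs x y / (N + M) := div_pos hΓ (by linarith)
  have hγK : Gam h k τ ψ ψs φ φs x y / (N + M) ≤ Lam ψ ψs φ φs := calc
    _ ≤ Gam h k τ ψ ψs φ φs x y := div_le_self hΓ.le hNM
    _ ≤ ψ 0 0 := Gam_le_psi hψ hC₀ hC₀
    _ ≤ Lam ψ ψs φ φs := psi_le_Lam hψ 0 0
  have hε : 0 < ε := contractionRate_pos hγ (hγ.trans_le hγK) hτ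
  refine ⟨1 - ε, by linarith [contractionRate_le_one hγ hγK hτ.le], by linarith,
    fun n => ?_⟩
  simp only [mSeq_eq_neg_MSeq]
  have hup := MSeq_succ_le hP hh1 hhM hk1 hkN hτ.le w n
  have hdown := MSeq_succ_le hP hh1 hhM hk1 hkN hτ.le (-w) n
  rcases le_or_gt (2 * hkProj x y w (.inl x₀) (6 * n * τ))
    (MSeq h k τ w x y n - MSeq h k τ (-w) x y n) with hmid | hmid
  · have := MSeq_succ_le_sub hsol hP hψ hψs hφ hφs hh1 hhM hk1 hkN hτ.le w n hx₀ hmid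
    linarith
  · have hmid' : 2 * hkProj x y (-w) (.inl x₀) (6 * n * τ) ≤
        MSeq h k τ (-w) x y n - MSeq h k τ (- -w) x y n := by
      rw [hkProj_neg, neg_neg]
      linarith
    have := MSeq_succ_le_sub hsol hP hψ hψs hφ hφs hh1 hhM hk1 hkN hτ.le (-w) n hx₀ hmid'
    rw [neg_neg] at this
    linarith

end HegselmannKrause

theorem stmt15_general
    (d N M h k : ℕ)
    (hh1 : 1 ≤ h) (hhM : h < M) (hk1 : 1 ≤ k) (hkN : k < N)
    (τ : ℝ) (hτ : 0 < τ)
    (ψ ψs φ φs : EuclideanSpace ℝ (Fin d) → EuclideanSpace ℝ (Fin d) → ℝ)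
    (hψ : Admissible ψ) (hψs : Admissible ψs) (hφ : Admissible φ) (hφs : Admissible φs)
    (x : Fin N → ℝ → EuclideanSpace ℝ (Fin d)) (y : Fin M → ℝ → EuclideanSpace ℝ (Fin d))
    (hsol : IsSol h k τ ψ ψs φ φs x y)
    (v : EuclideanSpace ℝ (Fin d))
    (D : ℕ → ℝ) (hD : ∀ n, D n = MSeq h k τ v x y n - mSeq h k τ v x y n) :
    (∀ n : ℕ, 0 ≤ D n) ∧ (∀ n : ℕ, D (n + 1) ≤ D n) ∧
    Tendsto D atTop (nhds 0) ∧
    (∀ i j : Fin N, Tendsto (fun t : ℝ => ⟪x i t - x j t, v⟫) atTop (nhds 0)) ∧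
    (∀ i j : Fin M, Tendsto (fun t : ℝ => ⟪y i t - y j t, v⟫) atTop (nhds 0)) ∧
    (∀ i : Fin N, ∀ j : Fin M, Tendsto (fun t : ℝ => ⟪x i t - y j t, v⟫) atTop (nhds 0)) := by
  obtain rfl : D = fun n => MSeq h k τ v x y n - mSeq h k τ v x y n := funext hD
  have hP : ProjectionsAreConsensus h k τ ψ ψs φ φs x y :=
    hsol.isDelayedConsensus hψ hψs hφ hφs hh1 hhM hk1 hkN
  have hband : ∀ b (n : ℕ) t, 6 * (n : ℝ) * τ ≤ t →
      hkProj x y v b t ∈ Icc (mSeq h k τ v x y n) (MSeq h k τ v x y n) := fun b n t ht =>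
    ⟨mSeq_le_hkProj hP hτ.le v n b ht, hkProj_le_MSeq hP hτ.le v n b ht⟩
  have hD0 : ∀ n, 0 ≤ MSeq h k τ v x y n - mSeq h k τ v x y n := fun n =>
    sub_nonneg.2 (mSeq_le_MSeq hP hτ.le v n (.inl ⟨0, by omega⟩))
  obtain ⟨r, hr0, hr1, hr⟩ := exists_contraction hsol hψ hψs hφ hφs hh1 hhM hk1 hkN hτ v
  have hlim := tendsto_zero_of_le_mul hD0 hr0 hr1 hr
  have hpair : ∀ b c, Tendsto (fun t => hkProj x y v b t - hkProj x y v c t) atTop (𝓝 0) :=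
    fun b c => tendsto_sub_of_forall_mem_Icc hlim (hband b) (hband c)
  refine ⟨hD0, fun n => (hr n).trans (mul_le_of_le_one_left (hD0 n) hr1.le), hlim,
    fun i j => ?_, fun i j => ?_, fun i j => ?_⟩
  · exact (hpair (.inl i) (.inl j)).congr fun t => (inner_sub_left _ _ _).symm
  · exact (hpair (.inr i) (.inr j)).congr fun t => (inner_sub_left _ _ _).symm
  · exact (hpair (.inl i) (.inr j)).congr fun t => (inner_sub_left _ _ _).symm

theorem stmt15
    (d N M h k : ℕ) (hd : 1 ≤ d) (hN : 2 ≤ N) (hM2 : 2 ≤ M) (hMN : M ≤ N)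
    (hh1 : 1 ≤ h) (hhM : h < M) (hk1 : 1 ≤ k) (hkN : k < N)
    (τ : ℝ) (hτ : 0 < τ)
    (ψ ψs φ φs : EuclideanSpace ℝ (Fin d) → EuclideanSpace ℝ (Fin d) → ℝ)
    (hψ : Admissible ψ) (hψs : Admissible ψs) (hφ : Admissible φ) (hφs : Admissible φs)
    (x : Fin N → ℝ → EuclideanSpace ℝ (Fin d)) (y : Fin M → ℝ → EuclideanSpace ℝ (Fin d))
    (hsol : IsSol h k τ ψ ψs φ φs x y)
    (v : EuclideanSpace ℝ (Fin d)) (hv : ‖v‖ = 1)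
    (hm₀pos : 0 < mSeq h k τ v x y 0)
    (D : ℕ → ℝ) (hD : ∀ n, D n = MSeq h k τ v x y n - mSeq h k τ v x y n) :
    (∀ n : ℕ, 0 ≤ D n) ∧ (∀ n : ℕ, D (n + 1) ≤ D n) ∧
    Tendsto D atTop (nhds 0) ∧
    (∀ i j : Fin N, Tendsto (fun t : ℝ => ⟪x i t - x j t, v⟫) atTop (nhds 0)) ∧
    (∀ i j : Fin M, Tendsto (fun t : ℝ => ⟪y i t - y j t, v⟫) atTop (nhds 0)) ∧
    (∀ i : Fin N, ∀ j : Fin M, Tendsto (fun t : ℝ => ⟪x i t - y j t, v⟫) atTop (nhds 0)) :=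
  stmt15_general d N M h k hh1 hhM hk1 hkN τ hτ ψ ψs φ φs hψ hψs hφ hφs x y hsol v D hD
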